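/- arXiv:1603.07767 — 4 statements merged into one kernel-verified Lean document; each statement's English description precedes it below -/
import Mathlib

section
/- Let f, g be nonnegative functions in L^1(ℝ^d) with equal L^1 norms. If g is radially symmetric and non-increasing (rearranged), and the symmetric decreasing rearrangement f^# of f is less concentrated than g (i.e. ∫_{B_R(0)} f^# dx ≤ ∫_{B_R(0)} g dx for all R > 0), then the second moment of f is at least the second moment of g: ∫ f(x)|x|² dx ≥ ∫ g(x)|x|² dx. -/
/-!
Writing `‖x‖² = ∫₀^‖x‖ 2r dr` and exchanging the integrals (layer cake) turns the second moment
of `h ≥ 0` into `∫₀^∞ 2r · (mass of h outside B_r) dr`, so it suffices to compare tails.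
The superlevel sets of the radially decreasing `fsharp` are balls, so on every ball `fsharp`
carries at least the mass of the equidistributed `f`; together with `fsharp ≺ g` and equal
total masses this gives `tail g ≤ tail fsharp ≤ tail f` for every radius.
-/

open MeasureTheory ENNReal Set Metric

section Radial

variable {E : Type*} [NormedAddCommGroup E]

def RadialAntitone (h : E → ℝ) : Prop :=
  ∃ F : ℝ → ℝ, AntitoneOn F (Ici 0) ∧ ∀ x, h x = F ‖x‖

theorem RadialAntitone.superlevel_subset_or_ball_subset {h : E → ℝ} (hh : RadialAntitone h)
    (t R : ℝ) : {x | t < h x} ⊆ ball 0 R ∨ ball 0 R ⊆ {x | t < h x} := by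
  obtain ⟨F, hF, hhF⟩ := hh
  obtain rfl : h = fun x : E => F ‖x‖ := funext hhF
  by_cases hout : ∃ y : E, t < F ‖y‖ ∧ R ≤ ‖y‖
  · obtain ⟨y, hty, hRy⟩ := hout
    refine Or.inr fun x hx => hty.trans_le ?_
    rw [mem_ball_zero_iff] at hx
    exact hF (norm_nonneg x) (norm_nonneg y) (hx.le.trans hRy)
  · push Not at hout
    exact Or.inl fun x hx => mem_ball_zero_iff.2 (hout x hx)

theorem RadialAntitone.measurable [MeasurableSpace E] [OpensMeasurableSpace E] {h : E → ℝ}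
    (hh : RadialAntitone h) : Measurable h := by
  obtain ⟨F, hF, hhF⟩ := hh
  obtain rfl : h = fun x : E => F ‖x‖ := funext hhF
  have hanti : Antitone fun r : ℝ => F (max r 0) := fun r s hrs =>
    hF (le_max_right r 0) (le_max_right s 0) (max_le_max hrs le_rfl)
  simpa only [Function.comp_def, max_eq_left (norm_nonneg _)] using
    hanti.measurable.comp (measurable_norm (α := E))

end Radial

theorem lintegral_ofReal_eq_of_meas_lt_eq {α : Type*} [MeasurableSpace α] {μ : Measure α}
    {f g : α → ℝ} (hf0 : ∀ x, 0 ≤ f x) (hg0 : ∀ x, 0 ≤ g x)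
    (hf : AEMeasurable f μ) (hg : AEMeasurable g μ)
    (hequi : ∀ t : ℝ, 0 < t → μ {x | t < f x} = μ {x | t < g x}) :
    ∫⁻ x, ENNReal.ofReal (f x) ∂μ = ∫⁻ x, ENNReal.ofReal (g x) ∂μ := by
  rw [lintegral_eq_lintegral_meas_lt μ (ae_of_all _ hf0) hf,
    lintegral_eq_lintegral_meas_lt μ (ae_of_all _ hg0) hg]
  exact setLIntegral_congr_fun measurableSet_Ioi hequi

theorem setLIntegral_compl_le_of_setLIntegral_le {α : Type*} [MeasurableSpace α]
    {μ : Measure α} {s : Set α} (hs : MeasurableSet s) {a b : α → ℝ≥0∞}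
    (hs_le : ∫⁻ x in s, a x ∂μ ≤ ∫⁻ x in s, b x ∂μ)
    (htot : ∫⁻ x, b x ∂μ ≤ ∫⁻ x, a x ∂μ) (ha : ∫⁻ x, a x ∂μ ≠ ⊤) :
    ∫⁻ x in sᶜ, b x ∂μ ≤ ∫⁻ x in sᶜ, a x ∂μ := by
  have ha_s : ∫⁻ x in s, a x ∂μ ≠ ⊤ :=
    ne_top_of_le_ne_top ha (setLIntegral_le_lintegral s a)
  rw [← ENNReal.add_le_add_iff_left ha_s]
  calc ∫⁻ x in s, a x ∂μ + ∫⁻ x in sᶜ, b x ∂μ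
      ≤ ∫⁻ x in s, b x ∂μ + ∫⁻ x in sᶜ, b x ∂μ := by gcongr
    _ = ∫⁻ x, b x ∂μ := lintegral_add_compl b hs
    _ ≤ ∫⁻ x, a x ∂μ := htot
    _ = ∫⁻ x in s, a x ∂μ + ∫⁻ x in sᶜ, a x ∂μ := (lintegral_add_compl a hs).symm

section Balls

variable {E : Type*} [NormedAddCommGroup E] [MeasurableSpace E] [OpensMeasurableSpace E]
  {μ : Measure E}

/-- Bathtub principle: the superlevel sets of `fs` are balls, so on a ball `B`,
`μ ({t < f} ∩ B) ≤ min (μ {t < f}) (μ B) = μ ({t < fs} ∩ B)` for every level `t`. -/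
theorem setLIntegral_ball_le_of_radialAntitone {f fs : E → ℝ} (hf0 : ∀ x, 0 ≤ f x)
    (hfs0 : ∀ x, 0 ≤ fs x) (hf : AEMeasurable f μ) (hfs : RadialAntitone fs)
    (hequi : ∀ t : ℝ, 0 < t → μ {x | t < f x} = μ {x | t < fs x}) (R : ℝ) :
    ∫⁻ x in ball 0 R, ENNReal.ofReal (f x) ∂μ ≤ ∫⁻ x in ball 0 R, ENNReal.ofReal (fs x) ∂μ := by
  rw [lintegral_eq_lintegral_meas_lt _ (ae_of_all _ hf0) hf.restrict,
    lintegral_eq_lintegral_meas_lt _ (ae_of_all _ hfs0) hfs.measurable.aemeasurable]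
  refine setLIntegral_mono' measurableSet_Ioi fun t ht => ?_
  rw [Measure.restrict_apply' measurableSet_ball, Measure.restrict_apply' measurableSet_ball]
  rcases hfs.superlevel_subset_or_ball_subset t R with hsub | hsub
  · calc μ ({x | t < f x} ∩ ball 0 R) ≤ μ {x | t < f x} := measure_mono inter_subset_left
      _ = μ ({x | t < fs x} ∩ ball 0 R) := by rw [hequi t ht, inter_eq_left.2 hsub]
  · calc μ ({x | t < f x} ∩ ball 0 R) ≤ μ (ball 0 R) := measure_mono inter_subset_right
      _ = μ ({x | t < fs x} ∩ ball 0 R) := by rw [inter_eq_right.2 hsub]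

theorem lintegral_mul_ofReal_norm_sq_eq {w : E → ℝ≥0∞} (hw : AEMeasurable w μ) :
    ∫⁻ x, w x * ENNReal.ofReal (‖x‖ ^ 2) ∂μ =
      ∫⁻ r in Ioi 0, (∫⁻ x in (ball 0 r)ᶜ, w x ∂μ) * ENNReal.ofReal (2 * r) := by
  have hsq : ∀ x : E, ‖x‖ ^ 2 = ∫ t in (0 : ℝ)..‖x‖, 2 * t := fun x => by
    rw [intervalIntegral.integral_const_mul, integral_id]
    ring
  have hlayer := lintegral_comp_eq_lintegral_meas_le_mul (μ.withDensity w) (g := fun t => 2 * t)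
    (ae_of_all _ fun x => norm_nonneg x) measurable_norm.aemeasurable
    (fun t _ => (continuous_const.mul continuous_id).intervalIntegrable 0 t)
    (ae_restrict_of_forall_mem measurableSet_Ioi fun t (ht : 0 < t) => by positivity)
  simp_rw [← hsq] at hlayer
  have hdens : ∫⁻ x, w x * ENNReal.ofReal (‖x‖ ^ 2) ∂μ =
      ∫⁻ x, ENNReal.ofReal (‖x‖ ^ 2) ∂μ.withDensity w :=
    (lintegral_withDensity_eq_lintegral_mul₀ hw
      (measurable_norm.pow_const 2).ennreal_ofReal.aemeasurable).symm
  rw [hdens, hlayer]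
  refine setLIntegral_congr_fun measurableSet_Ioi fun r _ => ?_
  have hset : {x : E | r ≤ ‖x‖} = (ball 0 r)ᶜ := by ext; simp
  rw [hset, withDensity_apply _ measurableSet_ball.compl]

end Balls

theorem second_moment_ge_of_rearrangement_less_concentrated_general
    (d : ℕ) (f g fsharp : EuclideanSpace ℝ (Fin d) → ℝ)
    (hf0 : ∀ x, 0 ≤ f x) (hg0 : ∀ x, 0 ≤ g x) (hfs0 : ∀ x, 0 ≤ fsharp x)
    (hfi : Integrable f) (hgi : Integrable g)
    (hmass : ∫ x, f x = ∫ x, g x)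
    -- fsharp is rearranged
    (hfs_rad : ∃ F : ℝ → ℝ, AntitoneOn F (Set.Ici 0) ∧ ∀ x, fsharp x = F ‖x‖)
    -- fsharp is equidistributed with f
    (hequi : ∀ t : ℝ, 0 < t →
      volume {x | t < f x} = volume {x | t < fsharp x})
    -- fsharp ≺ g : fsharp is less concentrated than g
    (hconc : ∀ R : ℝ, 0 < R →
      ∫⁻ x in Metric.ball (0 : EuclideanSpace ℝ (Fin d)) R, ENNReal.ofReal (fsharp x) ≤
      ∫⁻ x in Metric.ball (0 : EuclideanSpace ℝ (Fin d)) R, ENNReal.ofReal (g x)) :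
    ∫⁻ x, ENNReal.ofReal (g x * ‖x‖ ^ 2) ≤ ∫⁻ x, ENNReal.ofReal (f x * ‖x‖ ^ 2) := by
  have hfs : RadialAntitone fsharp := hfs_rad
  have hfs_mass : ∫⁻ x, ENNReal.ofReal (fsharp x) = ∫⁻ x, ENNReal.ofReal (f x) :=
    (lintegral_ofReal_eq_of_meas_lt_eq hf0 hfs0 hfi.aemeasurable
      hfs.measurable.aemeasurable hequi).symm
  have hg_mass : ∫⁻ x, ENNReal.ofReal (g x) = ∫⁻ x, ENNReal.ofReal (f x) := by
    rw [← ofReal_integral_eq_lintegral_ofReal hgi (ae_of_all _ hg0),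
      ← ofReal_integral_eq_lintegral_ofReal hfi (ae_of_all _ hf0), hmass]
  have hf_fin : ∫⁻ x, ENNReal.ofReal (f x) ≠ ⊤ := hfi.lintegral_lt_top.ne
  simp_rw [ENNReal.ofReal_mul (hg0 _), ENNReal.ofReal_mul (hf0 _)]
  rw [lintegral_mul_ofReal_norm_sq_eq hgi.aemeasurable.ennreal_ofReal,
    lintegral_mul_ofReal_norm_sq_eq hfi.aemeasurable.ennreal_ofReal]
  refine setLIntegral_mono' measurableSet_Ioi fun r hr => mul_le_mul_left ?_ _
  calc ∫⁻ x in (ball 0 r)ᶜ, ENNReal.ofReal (g x)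
      ≤ ∫⁻ x in (ball 0 r)ᶜ, ENNReal.ofReal (fsharp x) :=
        setLIntegral_compl_le_of_setLIntegral_le measurableSet_ball (hconc r hr)
          (hg_mass.trans hfs_mass.symm).le (hfs_mass ▸ hf_fin)
    _ ≤ ∫⁻ x in (ball 0 r)ᶜ, ENNReal.ofReal (f x) :=
        setLIntegral_compl_le_of_setLIntegral_le measurableSet_ball
          (setLIntegral_ball_le_of_radialAntitone hf0 hfs0 hfi.aemeasurable hfs hequi r)
          hfs_mass.le hf_fin

/-- If `f, g ∈ L¹₊(ℝᵈ)` have equal masses, `g` is rearranged (radially symmetric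
non-increasing), and the Schwarz rearrangement `fsharp` of `f` (equidistributed with `f`)
is less concentrated than `g`, then the second moment of `f` is at least that of `g`. -/
theorem second_moment_ge_of_rearrangement_less_concentrated
    (d : ℕ) (f g fsharp : EuclideanSpace ℝ (Fin d) → ℝ)
    (hf0 : ∀ x, 0 ≤ f x) (hg0 : ∀ x, 0 ≤ g x) (hfs0 : ∀ x, 0 ≤ fsharp x)
    (hfi : Integrable f) (hgi : Integrable g)
    (hmass : ∫ x, f x = ∫ x, g x)
    -- g is rearranged: radially symmetric with non-increasing radial profile
    (hg_rad : ∃ G : ℝ → ℝ, AntitoneOn G (Set.Ici 0) ∧ ∀ x, g x = G ‖x‖)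
    -- fsharp is rearranged
    (hfs_rad : ∃ F : ℝ → ℝ, AntitoneOn F (Set.Ici 0) ∧ ∀ x, fsharp x = F ‖x‖)
    -- fsharp is equidistributed with f
    (hequi : ∀ t : ℝ, 0 < t →
      volume {x | t < f x} = volume {x | t < fsharp x})
    -- fsharp ≺ g : fsharp is less concentrated than g
    (hconc : ∀ R : ℝ, 0 < R →
      ∫⁻ x in Metric.ball (0 : EuclideanSpace ℝ (Fin d)) R, ENNReal.ofReal (fsharp x) ≤
      ∫⁻ x in Metric.ball (0 : EuclideanSpace ℝ (Fin d)) R, ENNReal.ofReal (g x)) :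
    ∫⁻ x, ENNReal.ofReal (g x * ‖x‖ ^ 2) ≤ ∫⁻ x, ENNReal.ofReal (f x * ‖x‖ ^ 2) :=
  second_moment_ge_of_rearrangement_less_concentrated_general d f g fsharp hf0 hg0 hfs0 hfi hgi
    hmass hfs_rad hequi hconc
end

section
/- For a half-open rectangle Q = [-r₁, r₁] × [-r₂+c, r₂+c] ⊂ ℝ² with r₁ ≤ r₂ and c > 0, let Q⁻ = Q ∩ {x - y > 0} and Q̃⁺ = Q ∩ {x - y < 0} ∩ {y ≤ r₂}. Then for any function K' : ℝ → ℝ that is odd (K'(-s) = -K'(s)) and negative for s > 0: ∫_{Q⁻} K'(x-y) dx dy + ∫_{Q̃⁺} K'(x-y) dx dy ≥ 0. Equivalently, for every h > 0 the length of the line segment (Q⁻ ∪ Q̃⁺) ∩ {x - y = -h} is at least the length of (Q⁻ ∪ Q̃⁺) ∩ {x - y = h}. -/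
open MeasureTheory Set

private lemma slice_len_aux (r₁ r₂ c h : ℝ) (hr₁ : 0 < r₁) (hr₁₂ : r₁ ≤ r₂) (hc : 0 < c)
    (hh : 0 < h) :
    r₁ - max (-r₁) (c + h - r₂) ≤ min r₁ (r₂ - h) - max (-r₁) (c - h - r₂) := by
  rcases max_cases (-r₁) (c + h - r₂) with ⟨e1, c1⟩ | ⟨e1, c1⟩ <;>
  rcases max_cases (-r₁) (c - h - r₂) with ⟨e2, c2⟩ | ⟨e2, c2⟩ <;>
  rcases min_cases r₁ (r₂ - h) with ⟨e3, c3⟩ | ⟨e3, c3⟩ <;>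
  rw [e1, e2, e3] <;> linarith

/-- For the rectangle `Q = [-r₁,r₁] × [-r₂+c, r₂+c]` with `r₁ ≤ r₂`, `c > 0`, and
`Q⁻ = Q ∩ {x-y>0}`, `Q̃⁺ = Q ∩ {x-y<0} ∩ {y ≤ r₂}`, the integral of an odd function
`K'(x-y)` (negative for positive arguments) over `Q⁻ ∪ Q̃⁺` is nonnegative;
equivalently, the slices of `Q⁻ ∪ Q̃⁺` by `{x - y = -h}` are at least as long as those
by `{x - y = h}` for every `h > 0`. -/
theorem rectangle_slice_integral_nonneg
    (r₁ r₂ c : ℝ) (hr₁ : 0 < r₁) (hr₁₂ : r₁ ≤ r₂) (hc : 0 < c)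
    (K' : ℝ → ℝ) (hodd : ∀ s, K' (-s) = -K' s) (hneg : ∀ s : ℝ, 0 < s → K' s < 0)
    (Q Qm Qp : Set (ℝ × ℝ))
    (hQ : Q = Set.Icc (-r₁) r₁ ×ˢ Set.Icc (-r₂ + c) (r₂ + c))
    (hQm : Qm = Q ∩ {p | p.2 < p.1})
    (hQp : Qp = Q ∩ {p | p.1 < p.2} ∩ {p | p.2 ≤ r₂})
    (hint₁ : IntegrableOn (fun p : ℝ × ℝ => K' (p.1 - p.2)) Qm)
    (hint₂ : IntegrableOn (fun p : ℝ × ℝ => K' (p.1 - p.2)) Qp) :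
    0 ≤ (∫ p in Qm, K' (p.1 - p.2)) + ∫ p in Qp, K' (p.1 - p.2) ∧
    ∀ h : ℝ, 0 < h →
      volume {x : ℝ | (x, x - h) ∈ Qm ∪ Qp} ≤ volume {x : ℝ | (x, x + h) ∈ Qm ∪ Qp} := by
  -- slice set computations
  have hA : ∀ h : ℝ, 0 < h →
      {x : ℝ | (x, x - h) ∈ Qm ∪ Qp} = Icc (max (-r₁) (c + h - r₂)) r₁ := by
    intro h hh
    ext x
    simp only [hQm, hQp, hQ, mem_union, mem_inter_iff, mem_prod, mem_Icc, mem_setOf_eq,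
      max_le_iff]
    constructor
    · rintro (⟨⟨⟨h1, h2⟩, h3, h4⟩, h5⟩ | ⟨⟨⟨⟨h1, h2⟩, h3, h4⟩, h5⟩, h6⟩)
      · exact ⟨⟨h1, by linarith⟩, h2⟩
      · linarith
    · rintro ⟨⟨h1, h3⟩, h2⟩
      exact Or.inl ⟨⟨⟨h1, h2⟩, by linarith, by linarith⟩, by linarith⟩
  have hB : ∀ h : ℝ, 0 < h →
      {x : ℝ | (x, x + h) ∈ Qm ∪ Qp} = Icc (max (-r₁) (c - h - r₂)) (min r₁ (r₂ - h)) := by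
    intro h hh
    ext x
    simp only [hQm, hQp, hQ, mem_union, mem_inter_iff, mem_prod, mem_Icc, mem_setOf_eq,
      max_le_iff, le_min_iff]
    constructor
    · rintro (⟨⟨⟨h1, h2⟩, h3, h4⟩, h5⟩ | ⟨⟨⟨⟨h1, h2⟩, h3, h4⟩, h5⟩, h6⟩)
      · linarith
      · exact ⟨⟨h1, by linarith⟩, h2, by linarith⟩
    · rintro ⟨⟨h1, h3⟩, h2, h4⟩
      exact Or.inr ⟨⟨⟨⟨h1, h2⟩, by linarith, by linarith⟩, by linarith⟩, by linarith⟩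
  have part2 : ∀ h : ℝ, 0 < h →
      volume {x : ℝ | (x, x - h) ∈ Qm ∪ Qp} ≤ volume {x : ℝ | (x, x + h) ∈ Qm ∪ Qp} := by
    intro h hh
    rw [hA h hh, hB h hh, Real.volume_Icc, Real.volume_Icc]
    exact ENNReal.ofReal_le_ofReal
      (by linarith [slice_len_aux r₁ r₂ c h hr₁ hr₁₂ hc hh])
  refine ⟨?_, part2⟩
  -- measurability of the pieces
  have hQm_meas : MeasurableSet Qm := by
    rw [hQm, hQ]
    exact (measurableSet_Icc.prod measurableSet_Icc).inter
      (measurableSet_lt measurable_snd measurable_fst)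
  have hQp_meas : MeasurableSet Qp := by
    rw [hQp, hQ]
    exact ((measurableSet_Icc.prod measurableSet_Icc).inter
      (measurableSet_lt measurable_fst measurable_snd)).inter
      (measurableSet_le measurable_snd measurable_const)
  have hS_meas : MeasurableSet (Qm ∪ Qp) := hQm_meas.union hQp_meas
  have hdisj : Disjoint Qm Qp := by
    rw [hQm, hQp, Set.disjoint_left]
    rintro p ⟨_, h1⟩ ⟨⟨_, h2⟩, _⟩
    simp only [mem_setOf_eq] at h1 h2
    exact absurd h2 (not_lt.mpr h1.le)
  set g : ℝ × ℝ → ℝ := fun p => K' (p.1 - p.2) with hg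
  have hintS : IntegrableOn g (Qm ∪ Qp) := hint₁.union hint₂
  have hf : Integrable ((Qm ∪ Qp).indicator g) volume :=
    (integrable_indicator_iff hS_meas).mpr hintS
  -- the measure-preserving shear
  set Φ : ℝ × ℝ → ℝ × ℝ := fun z => (z.2, z.2 - z.1) with hΦ
  have hΦm : Measurable Φ := measurable_snd.prodMk (measurable_snd.sub measurable_fst)
  have hmp : MeasurePreserving Φ volume volume := by
    rw [Measure.volume_eq_prod ℝ ℝ]
    have h2 : MeasurePreserving (fun z : ℝ × ℝ => (z.1, -z.2))
        ((volume : Measure ℝ).prod volume) ((volume : Measure ℝ).prod volume) :=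
      (MeasurePreserving.id volume).prod (Measure.measurePreserving_neg volume)
    have h3 := measurePreserving_prod_add (volume : Measure ℝ) volume
    have h1 : MeasurePreserving (Prod.swap : ℝ × ℝ → ℝ × ℝ)
        ((volume : Measure ℝ).prod volume) ((volume : Measure ℝ).prod volume) :=
      Measure.measurePreserving_swap
    have hcomp := h3.comp (h2.comp h1)
    have hfun : Φ = (fun z : ℝ × ℝ => (z.1, z.1 + z.2)) ∘
        ((fun z : ℝ × ℝ => (z.1, -z.2)) ∘ Prod.swap) := by
      funext z
      simp [hΦ, Function.comp, sub_eq_add_neg]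
    rw [hfun]
    exact hcomp
  -- slices
  set slice : ℝ → Set ℝ := fun u => {x | (x, x - u) ∈ Qm ∪ Qp} with hslice
  have hslice_meas : ∀ u, MeasurableSet (slice u) := by
    intro u
    exact hS_meas.preimage (measurable_id.prodMk (measurable_id.sub measurable_const))
  set G : ℝ → ℝ := fun u => (volume (slice u)).toReal • K' u with hG'
  -- transfer the integral
  have hΦsm : AEStronglyMeasurable ((Qm ∪ Qp).indicator g) (Measure.map Φ volume) := by
    rw [hmp.map_eq]; exact hf.aestronglyMeasurable
  have hstep2 : ∫ z, (Qm ∪ Qp).indicator g z = ∫ z, (Qm ∪ Qp).indicator g (Φ z) := by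
    conv_lhs => rw [← hmp.map_eq]
    exact integral_map hΦm.aemeasurable hΦsm
  have hFeq : ∀ z : ℝ × ℝ,
      (Qm ∪ Qp).indicator g (Φ z) = (slice z.1).indicator (fun _ => K' z.1) z.2 := by
    intro z
    by_cases hz : (z.2, z.2 - z.1) ∈ Qm ∪ Qp
    · rw [Set.indicator_of_mem hz, Set.indicator_of_mem (show z.2 ∈ slice z.1 from hz)]
      simp [hg, sub_sub_cancel]
    · rw [Set.indicator_of_notMem hz,
        Set.indicator_of_notMem (show z.2 ∉ slice z.1 from hz)]
  have hFint : Integrable (fun z : ℝ × ℝ => (slice z.1).indicator (fun _ => K' z.1) z.2)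
      ((volume : Measure ℝ).prod volume) := by
    rw [← Measure.volume_eq_prod ℝ ℝ]
    have h := (integrable_map_measure hΦsm hΦm.aemeasurable).mp (by rw [hmp.map_eq]; exact hf)
    refine h.congr (Filter.Eventually.of_forall fun z => ?_)
    exact hFeq z
  have hinner : ∀ u : ℝ,
      (∫ x, (slice u).indicator (fun _ => K' u) x) = G u := by
    intro u
    exact integral_indicator_const (K' u) (hslice_meas u)
  have hGint : Integrable G volume := by
    have h := hFint.integral_prod_left
    exact h.congr (Filter.Eventually.of_forall fun u => hinner u)
  have htotal : (∫ p in Qm, K' (p.1 - p.2)) + ∫ p in Qp, K' (p.1 - p.2) = ∫ u, G u := by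
    calc (∫ p in Qm, K' (p.1 - p.2)) + ∫ p in Qp, K' (p.1 - p.2)
        = ∫ p in Qm ∪ Qp, g p := (setIntegral_union hdisj hQp_meas hint₁ hint₂).symm
      _ = ∫ z, (Qm ∪ Qp).indicator g z := (integral_indicator hS_meas).symm
      _ = ∫ z, (Qm ∪ Qp).indicator g (Φ z) := hstep2
      _ = ∫ z : ℝ × ℝ, (slice z.1).indicator (fun _ => K' z.1) z.2 := by
          exact integral_congr_ae (Filter.Eventually.of_forall fun z => hFeq z)
      _ = ∫ u, ∫ x, (slice u).indicator (fun _ => K' u) x := by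
          rw [Measure.volume_eq_prod ℝ ℝ]
          exact integral_prod _ hFint
      _ = ∫ u, G u := integral_congr_ae (Filter.Eventually.of_forall fun u => hinner u)
  rw [htotal]
  -- split the integral at 0 and use oddness
  have hGnegsm : AEStronglyMeasurable G (Measure.map (Neg.neg : ℝ → ℝ) volume) := by
    rw [Measure.map_neg_eq_self]; exact hGint.aestronglyMeasurable
  have hGneg : Integrable (fun u => G (-u)) volume := by
    have h := (integrable_map_measure hGnegsm measurable_neg.aemeasurable).mp
      (by rw [Measure.map_neg_eq_self]; exact hGint)
    exact h
  have hsplit : ∫ u, G u = (∫ u in Iic (0:ℝ), G u) + ∫ u in Ioi (0:ℝ), G u := by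
    rw [← setIntegral_union (Iic_disjoint_Ioi le_rfl) measurableSet_Ioi hGint.integrableOn
      hGint.integrableOn, Iic_union_Ioi, setIntegral_univ]
  have hIic : (∫ u in Iic (0:ℝ), G u) = ∫ u in Ioi (0:ℝ), G (-u) := by
    rw [integral_comp_neg_Ioi, neg_zero]
  -- pointwise nonnegativity on Ioi 0
  have hpt : ∀ u ∈ Ioi (0:ℝ), 0 ≤ G (-u) + G u := by
    intro u hu
    have hu' : (0:ℝ) < u := hu
    have hLle : (volume (slice u)).toReal ≤ (volume (slice (-u))).toReal := by
      have hset : slice (-u) = {x : ℝ | (x, x + u) ∈ Qm ∪ Qp} := by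
        simp only [hslice, sub_neg_eq_add]
      have hle : volume (slice u) ≤ volume (slice (-u)) := by
        rw [hset]; exact part2 u hu'
      have hsub : slice (-u) ⊆ Icc (-r₁) r₁ := by
        intro x hx
        rcases hx with hx | hx
        · rw [hQm, hQ] at hx; exact hx.1.1
        · rw [hQp, hQ] at hx; exact hx.1.1.1
      have hfin : volume (slice (-u)) ≠ ⊤ :=
        (lt_of_le_of_lt (measure_mono hsub)
          (by rw [Real.volume_Icc]; exact ENNReal.ofReal_lt_top)).ne
      exact ENNReal.toReal_mono hfin hle
    have hK : K' u < 0 := hneg u hu'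
    have : G (-u) + G u
        = ((volume (slice u)).toReal - (volume (slice (-u))).toReal) * K' u := by
      simp only [hG', smul_eq_mul, hodd]
      ring
    rw [this]
    nlinarith
  have hnn : 0 ≤ ∫ u in Ioi (0:ℝ), (G (-u) + G u) :=
    setIntegral_nonneg measurableSet_Ioi hpt
  rw [integral_add hGneg.integrableOn hGint.integrableOn] at hnn
  rw [hsplit, hIic]
  linarith
end

section
/- Let μ₀ ∈ C(ℝ^d) ∩ L^1_+(ℝ^d). Suppose for every unit vector e ∈ ℝ^d there exists a hyperplane H with normal vector e such that μ₀ is symmetric decreasing about H. Then μ₀ is radially decreasing up to a translation: there exists a ∈ ℝ^d such that μ₀(· - a) is radially symmetric and non-increasing in |x|. -/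
/-!
Translate `μ₀` so that its symmetry hyperplanes in the coordinate directions pass through the
origin; composing the reflections in them gives `x ↦ -x`, so the translate is even. If its
symmetry hyperplane in a direction `e` were `⟪x, e⟫ = c` with `c ≠ 0`, evenness would make
`⟪x, e⟫ = -c` a second one, and composing the two reflections is translation by `4c • e`; but
a continuous integrable function invariant under a nonzero translation vanishes. Hence all
symmetry hyperplanes pass through the origin. Any two vectors of equal norm are exchanged by a
reflection in such a hyperplane, so the translate is radial, and it decreases along a ray because
it decreases along the line through the origin in that direction.
-/
open MeasureTheory Metric
open scoped ENNReal

theorem Function.Periodic.eq_zero_of_integrable {E F : Type*} [NormedAddCommGroup E]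
    [NormedSpace ℝ E] [MeasurableSpace E] [BorelSpace E] {μ : Measure E}
    [μ.IsAddLeftInvariant] [μ.IsOpenPosMeasure] [NormedAddCommGroup F] {f : E → F} {v : E}
    (hper : Function.Periodic f v) (hv : v ≠ 0) (hf : Continuous f) (hfi : Integrable f μ) :
    f = 0 := by
  funext x
  by_contra hx
  have hx0 : 0 < ‖f x‖ := norm_pos_iff.mpr hx
  set U := {y | ‖f x‖ / 2 < ‖f y‖}
  obtain ⟨r, hr, hball⟩ : ∃ r > 0, ball x r ⊆ U :=
    isOpen_iff.mp (isOpen_lt continuous_const hf.norm) x (half_lt_self hx0)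
  obtain ⟨w, hw, hperw⟩ : ∃ w : E, 2 * r < ‖w‖ ∧ Function.Periodic f w := by
    obtain ⟨N, hN⟩ := exists_nat_gt (2 * r / ‖v‖)
    refine ⟨N • v, ?_, hper.nsmul N⟩
    rwa [RCLike.norm_nsmul ℝ, nsmul_eq_mul, ← div_lt_iff₀ (norm_pos_iff.mpr hv)]
  have hsub : ∀ k : ℤ, ball (x + k • w) r ⊆ U := by
    intro k y hy
    have : y - k • w ∈ ball x r := by
      rwa [mem_ball, dist_eq_norm, sub_sub, add_comm, ← dist_eq_norm]
    simpa [U, hperw.sub_zsmul_eq k] using hball this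
  have hdisj : Pairwise fun j k : ℤ => Disjoint (ball (x + j • w) r) (ball (x + k • w) r) := by
    intro j k hjk
    apply ball_disjoint_ball
    have h1 : (1 : ℝ) ≤ |((j - k : ℤ) : ℝ)| := by
      exact_mod_cast Int.one_le_abs (sub_ne_zero.mpr hjk)
    rw [dist_add_left, dist_eq_norm, ← sub_smul, norm_zsmul ℝ, Real.norm_eq_abs]
    nlinarith [norm_nonneg w]
  have hmeas : μ (⋃ k : ℤ, ball (x + k • w) r) = ∞ := by
    rw [measure_iUnion hdisj fun _ => measurableSet_ball]
    have hball_eq : ∀ k : ℤ, μ (ball (x + k • w) r) = μ (ball x r) := fun k => by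
      rw [← measure_preimage_add μ (k • w), preimage_add_ball, add_sub_cancel_right]
    simp only [hball_eq]
    exact ENNReal.tsum_const_eq_top_of_ne_zero (measure_ball_pos μ x hr).ne'
  exact (hfi.measure_norm_gt_lt_top (half_pos hx0)).ne
    (top_le_iff.mp (hmeas ▸ measure_mono (Set.iUnion_subset hsub)))

open scoped RealInnerProductSpace

variable {E : Type*} [NormedAddCommGroup E] [InnerProductSpace ℝ E]

/-- For a unit vector `e`, the reflection in the hyperplane `⟪x, e⟫ = c`. -/
def hyperplaneReflection (e : E) (c : ℝ) (y : E) : E := y + (2 * (c - ⟪y, e⟫)) • e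

def SymmDecreasingAbout (f : E → ℝ) (e : E) (c : ℝ) : Prop :=
  ∀ x, ⟪x, e⟫ = c →
    (∀ t : ℝ, f (x + t • e) = f (x - t • e)) ∧
    (∀ s t : ℝ, 0 ≤ s → s ≤ t → f (x + t • e) ≤ f (x + s • e))

section hyperplaneReflection

variable {e : E}

theorem hyperplaneReflection_hyperplaneReflection (he : ‖e‖ = 1) (c c' : ℝ) (y : E) :
    hyperplaneReflection e c' (hyperplaneReflection e c y) = y + (2 * (c' - c)) • e := by
  have hee : ⟪e, e⟫ = 1 := by rw [real_inner_self_eq_norm_sq, he, one_pow]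
  simp only [hyperplaneReflection, inner_add_left, real_inner_smul_left, hee]
  module

theorem hyperplaneReflection_neg (e : E) (c : ℝ) (y : E) :
    hyperplaneReflection e (-c) (-y) = -hyperplaneReflection e c y := by
  simp only [hyperplaneReflection, inner_neg_left]
  module

theorem hyperplaneReflection_of_norm_eq {u w : E} (h : ‖u‖ = ‖w‖) (hne : u ≠ w) :
    hyperplaneReflection (‖u - w‖⁻¹ • (u - w)) 0 u = w := by
  have hpos : ‖u - w‖ ≠ 0 := norm_ne_zero_iff.mpr (sub_ne_zero.mpr hne)
  have hsq : ‖u - w‖ ^ 2 = 2 * ⟪u, u - w⟫ := by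
    rw [norm_sub_sq_real, inner_sub_right, real_inner_self_eq_norm_sq, ← h]; ring
  have hcoef : 2 * (0 - ⟪u, ‖u - w‖⁻¹ • (u - w)⟫) * ‖u - w‖⁻¹ = -1 := by
    rw [real_inner_smul_right]
    field_simp
    linarith
  rw [hyperplaneReflection, smul_smul, hcoef]
  module

end hyperplaneReflection

namespace SymmDecreasingAbout

variable {f : E → ℝ} {e : E} {c : ℝ}

theorem apply_hyperplaneReflection (he : ‖e‖ = 1) (h : SymmDecreasingAbout f e c) (y : E) :
    f (hyperplaneReflection e c y) = f y := by
  have hee : ⟪e, e⟫ = 1 := by rw [real_inner_self_eq_norm_sq, he, one_pow]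
  have hx : ⟪y + (c - ⟪y, e⟫) • e, e⟫ = c := by
    rw [inner_add_left, real_inner_smul_left, hee]; ring
  have := (h _ hx).1 (⟪y, e⟫ - c)
  rw [hyperplaneReflection]
  convert this.symm using 2 <;> module

theorem comp_add_right (h : SymmDecreasingAbout f e c) (a : E) :
    SymmDecreasingAbout (fun x => f (x + a)) e (c - ⟪a, e⟫) := by
  intro x hx
  have hxa : ⟪x + a, e⟫ = c := by rw [inner_add_left]; linarith
  simpa only [add_right_comm x, sub_add_eq_add_sub] using h (x + a) hxa

theorem center_eq_zero [MeasurableSpace E] [BorelSpace E] {μ : Measure E}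
    [μ.IsAddLeftInvariant] [μ.IsOpenPosMeasure] (he : ‖e‖ = 1) (h : SymmDecreasingAbout f e c)
    (heven : Function.Even f) (hf : Continuous f) (hfi : Integrable f μ) (hf0 : f ≠ 0) :
    c = 0 := by
  have hrefl := h.apply_hyperplaneReflection he
  have hrefl_neg : ∀ y, f (hyperplaneReflection e (-c) y) = f y := fun y => by
    rw [← neg_neg y, hyperplaneReflection_neg, heven, hrefl, heven, neg_neg]
  have hper : Function.Periodic f ((2 * (c - -c)) • e) := fun y => by
    rw [← hyperplaneReflection_hyperplaneReflection he, hrefl, hrefl_neg]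
  by_contra hc
  refine hf0 (hper.eq_zero_of_integrable ?_ hf hfi)
  exact smul_ne_zero (by contrapose! hc; linarith) (by rintro rfl; simp at he)

end SymmDecreasingAbout

theorem OrthonormalBasis.even_of_hyperplaneReflection_invariant {ι : Type*} [Fintype ι]
    (b : OrthonormalBasis ι ℝ E) {f : E → ℝ}
    (h : ∀ i y, f (hyperplaneReflection (b i) 0 y) = f y) : Function.Even f := by
  classical
  -- reflecting in the coordinate hyperplanes indexed by `s` negates the coordinates in `s`
  have key : ∀ (s : Finset ι) (x : E), f (x - (2 : ℝ) • ∑ i ∈ s, ⟪b i, x⟫ • b i) = f x := by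
    intro s
    induction s using Finset.induction_on with
    | empty => simp
    | insert j s hj ih =>
      intro x
      have hcoord : ⟪x - (2 : ℝ) • ∑ i ∈ s, ⟪b i, x⟫ • b i, b j⟫ = ⟪b j, x⟫ := by
        simp [inner_sub_left, real_inner_smul_left, sum_inner, orthonormal_iff_ite.mp b.orthonormal,
          real_inner_comm x, hj]
      have hstep : hyperplaneReflection (b j) 0 (x - (2 : ℝ) • ∑ i ∈ s, ⟪b i, x⟫ • b i) =
          x - (2 : ℝ) • ∑ i ∈ insert j s, ⟪b i, x⟫ • b i := by
        rw [hyperplaneReflection, hcoord, Finset.sum_insert hj]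
        module
      rw [← hstep, h j, ih x]
  intro x
  simpa [b.sum_repr', two_smul] using key Finset.univ x

theorem apply_eq_of_norm_eq {f : E → ℝ}
    (h : ∀ e : E, ‖e‖ = 1 → ∀ y, f (hyperplaneReflection e 0 y) = f y) {x y : E}
    (hxy : ‖x‖ = ‖y‖) : f x = f y := by
  rcases eq_or_ne x y with rfl | hne
  · rfl
  rw [← hyperplaneReflection_of_norm_eq hxy hne]
  exact (h _ (norm_smul_inv_norm (sub_ne_zero.mpr hne)) x).symm

theorem exists_antitoneOn_norm_of_symmDecreasingAbout_zero {f : E → ℝ}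
    (h : ∀ e : E, ‖e‖ = 1 → SymmDecreasingAbout f e 0) :
    ∃ G : ℝ → ℝ, AntitoneOn G (Set.Ici 0) ∧ ∀ x, f x = G ‖x‖ := by
  rcases subsingleton_or_nontrivial E with hE | hE
  · exact ⟨fun _ => f 0, antitoneOn_const, fun x => by rw [Subsingleton.elim x 0]⟩
  obtain ⟨e, he⟩ := exists_norm_eq E zero_le_one
  refine ⟨fun t => f (t • e), fun s hs t _ hst => ?_, fun x => ?_⟩
  · simpa using ((h e he) 0 (inner_zero_left _)).2 s t hs hst
  · refine apply_eq_of_norm_eq (fun e he => (h e he).apply_hyperplaneReflection he) ?_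
    rw [norm_smul, he, mul_one, norm_norm]

theorem OrthonormalBasis.exists_symmDecreasingAbout_zero_comp_add_right {ι : Type*} [Fintype ι]
    (b : OrthonormalBasis ι ℝ E) {f : E → ℝ} (h : ∀ i, ∃ c, SymmDecreasingAbout f (b i) c) :
    ∃ a : E, ∀ i, SymmDecreasingAbout (fun x => f (x + a)) (b i) 0 := by
  choose c hc using h
  refine ⟨∑ i, c i • b i, fun i => ?_⟩
  simpa [b.orthonormal.inner_left_fintype] using (hc i).comp_add_right (∑ i, c i • b i)

theorem radially_decreasing_of_symmetric_decreasing_all_directions_general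
    (d : ℕ) (μ₀ : EuclideanSpace ℝ (Fin d) → ℝ)
    (hcont : Continuous μ₀) (hint : Integrable μ₀)
    (hsym : ∀ e : EuclideanSpace ℝ (Fin d), ‖e‖ = 1 →
      ∃ c : ℝ, ∀ x : EuclideanSpace ℝ (Fin d), (inner ℝ x e : ℝ) = c →
        (∀ t : ℝ, μ₀ (x + t • e) = μ₀ (x - t • e)) ∧
        (∀ s t : ℝ, 0 ≤ s → s ≤ t → μ₀ (x + t • e) ≤ μ₀ (x + s • e))) :
    ∃ a : EuclideanSpace ℝ (Fin d), ∃ G : ℝ → ℝ,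
      AntitoneOn G (Set.Ici 0) ∧ ∀ x, μ₀ x = G ‖x - a‖ := by
  by_cases hzero : μ₀ = 0
  · exact ⟨0, fun _ => 0, antitoneOn_const, fun x => by simp [hzero]⟩
  set b := EuclideanSpace.basisFun (Fin d) ℝ
  have hb : ∀ i, ‖b i‖ = 1 := b.orthonormal.1
  obtain ⟨a, ha⟩ := b.exists_symmDecreasingAbout_zero_comp_add_right fun i => hsym (b i) (hb i)
  set ν := fun x => μ₀ (x + a)
  have hν0 : ν ≠ 0 := fun h => hzero (funext fun x => by simpa [ν] using congrFun h (x - a))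
  have heven : Function.Even ν :=
    b.even_of_hyperplaneReflection_invariant fun i => (ha i).apply_hyperplaneReflection (hb i)
  have hcentered : ∀ e, ‖e‖ = 1 → SymmDecreasingAbout ν e 0 := fun e he => by
    obtain ⟨c, hc⟩ : ∃ c, SymmDecreasingAbout μ₀ e c := hsym e he
    have hca := hc.comp_add_right a
    rwa [hca.center_eq_zero he heven (hcont.comp (by fun_prop)) (hint.comp_add_right a) hν0]
      at hca
  obtain ⟨G, hG, hνG⟩ := exists_antitoneOn_norm_of_symmDecreasingAbout_zero hcentered
  exact ⟨a, G, hG, fun x => by simpa [ν] using hνG (x - a)⟩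

/-- If a continuous nonnegative integrable function on `ℝᵈ` is symmetric decreasing
about some hyperplane in every direction, then it is radially decreasing up to a
translation. -/
theorem radially_decreasing_of_symmetric_decreasing_all_directions
    (d : ℕ) (μ₀ : EuclideanSpace ℝ (Fin d) → ℝ)
    (hcont : Continuous μ₀) (hpos : ∀ x, 0 ≤ μ₀ x) (hint : Integrable μ₀)
    (hsym : ∀ e : EuclideanSpace ℝ (Fin d), ‖e‖ = 1 →
      ∃ c : ℝ, ∀ x : EuclideanSpace ℝ (Fin d), (inner ℝ x e : ℝ) = c →
        (∀ t : ℝ, μ₀ (x + t • e) = μ₀ (x - t • e)) ∧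
        (∀ s t : ℝ, 0 ≤ s → s ≤ t → μ₀ (x + t • e) ≤ μ₀ (x + s • e))) :
    ∃ a : EuclideanSpace ℝ (Fin d), ∃ G : ℝ → ℝ,
      AntitoneOn G (Set.Ici 0) ∧ ∀ x, μ₀ x = G ‖x - a‖ :=
  radially_decreasing_of_symmetric_decreasing_all_directions_general d μ₀ hcont hint hsym
end

section
/- Let K : ℝ^d → [0,∞) be radially symmetric non-increasing with K ∈ L¹(B₁(0)) and K(x) → 0 as |x| → ∞, and let f ∈ L^1_+(ℝ^d) be radially symmetric non-increasing (hence f(x) → 0 as |x| → ∞). Then (K ∗ f)(x) → 0 as |x| → ∞. -/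
/-!
Since `K` is radially non-increasing, `K (x - y) ≤ K (x / 2)` when `‖y‖ ≤ ‖x‖ / 2`, and
`K (x - y) ≤ K 0` always. Hence `(K ∗ f) x ≤ K (x / 2) ‖f‖₁ + K 0 ∫_{‖y‖ > ‖x‖/2} f`, and both
terms vanish as `‖x‖ → ∞`: the first because `K` does, the second because it is the tail of an
integrable function.
-/

open MeasureTheory Filter ENNReal Metric Bornology Topology

def RadiallyAntitone {E : Type*} [Norm E] (K : E → ℝ) : Prop :=
  ∀ ⦃x y : E⦄, ‖x‖ ≤ ‖y‖ → K y ≤ K x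

lemma AntitoneOn.radiallyAntitone_comp_norm {E : Type*} [SeminormedAddCommGroup E] {Kb : ℝ → ℝ}
    (hKb : AntitoneOn Kb (Set.Ici 0)) : RadiallyAntitone fun x : E => Kb ‖x‖ :=
  fun x y h => hKb (norm_nonneg x) (norm_nonneg y) h

lemma tendsto_setLIntegral_compl_closedBall {α : Type*} [PseudoMetricSpace α]
    [MeasurableSpace α] [OpensMeasurableSpace α] {μ : Measure α} {g : α → ℝ≥0∞}
    (hg : AEMeasurable g μ) (hgi : ∫⁻ y, g y ∂μ ≠ ∞) (x : α) :
    Tendsto (fun R => ∫⁻ y in (closedBall x R)ᶜ, g y ∂μ) atTop (𝓝 0) := by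
  simp_rw [← lintegral_indicator measurableSet_closedBall.compl]
  rw [← lintegral_zero]
  refine tendsto_lintegral_filter_of_dominated_convergence' g
    (.of_forall fun R => hg.indicator measurableSet_closedBall.compl)
    (.of_forall fun R => .of_forall fun y => Set.indicator_le_self _ _ y) hgi
    (.of_forall fun y => tendsto_const_nhds.congr' ?_)
  filter_upwards [eventually_ge_atTop (dist y x)] with R hR
  simp [Set.indicator_of_notMem, mem_closedBall.2 hR]

namespace RadiallyAntitone

variable {E : Type*} [SeminormedAddCommGroup E] {K : E → ℝ}

lemma le_apply_zero (hK : RadiallyAntitone K) (x : E) : K x ≤ K 0 :=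
  hK (by simp)

variable [NormedSpace ℝ E]

lemma apply_sub_le_half (hK : RadiallyAntitone K) {x y : E} (hy : ‖y‖ ≤ ‖x‖ / 2) :
    K (x - y) ≤ K ((2 : ℝ)⁻¹ • x) :=
  hK <| by
    rw [norm_smul, norm_inv, Real.norm_two]
    linarith [norm_sub_norm_le x y]

variable [MeasurableSpace E] [OpensMeasurableSpace E]

lemma lintegral_mul_le (hK : RadiallyAntitone K) {f : E → ℝ} (hf : 0 ≤ f) (μ : Measure E)
    (x : E) :
    ∫⁻ y, ENNReal.ofReal (K (x - y) * f y) ∂μ ≤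
      ENNReal.ofReal (K ((2 : ℝ)⁻¹ • x)) * ∫⁻ y, ENNReal.ofReal (f y) ∂μ +
        ENNReal.ofReal (K 0) * ∫⁻ y in (closedBall 0 (‖x‖ / 2))ᶜ, ENNReal.ofReal (f y) ∂μ := by
  set A := closedBall (0 : E) (‖x‖ / 2)
  have hA : MeasurableSet A := measurableSet_closedBall
  have mul_le {c : ℝ} {y : E} (h : K (x - y) ≤ c) :
      ENNReal.ofReal (K (x - y) * f y) ≤ ENNReal.ofReal c * ENNReal.ofReal (f y) := by
    rw [← ENNReal.ofReal_mul' (hf y)]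
    exact ENNReal.ofReal_le_ofReal (mul_le_mul_of_nonneg_right h (hf y))
  rw [← lintegral_add_compl _ hA]
  gcongr ?_ + ?_
  · calc ∫⁻ y in A, ENNReal.ofReal (K (x - y) * f y) ∂μ
        ≤ ∫⁻ y in A, ENNReal.ofReal (K ((2 : ℝ)⁻¹ • x)) * ENNReal.ofReal (f y) ∂μ :=
          setLIntegral_mono' hA fun y hy =>
            mul_le (hK.apply_sub_le_half (by simpa [A] using hy))
      _ ≤ ∫⁻ y, ENNReal.ofReal (K ((2 : ℝ)⁻¹ • x)) * ENNReal.ofReal (f y) ∂μ :=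
          setLIntegral_le_lintegral _ _
      _ = _ := lintegral_const_mul' _ _ ofReal_ne_top
  · calc ∫⁻ y in Aᶜ, ENNReal.ofReal (K (x - y) * f y) ∂μ
        ≤ ∫⁻ y in Aᶜ, ENNReal.ofReal (K 0) * ENNReal.ofReal (f y) ∂μ :=
          setLIntegral_mono' hA.compl fun y _ => mul_le (hK.le_apply_zero _)
      _ = _ := lintegral_const_mul' _ _ ofReal_ne_top

theorem tendsto_lintegral_mul_cobounded (hK : RadiallyAntitone K)
    (hKlim : Tendsto K (cobounded E) (𝓝 0)) {f : E → ℝ} (hf : 0 ≤ f) {μ : Measure E}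
    (hfi : Integrable f μ) :
    Tendsto (fun x => ∫⁻ y, ENNReal.ofReal (K (x - y) * f y) ∂μ) (cobounded E) (𝓝 0) := by
  have half_norm : Tendsto (fun x : E => ‖x‖ / 2) (cobounded E) atTop :=
    tendsto_norm_cobounded_atTop.atTop_div_const two_pos
  have half : Tendsto (fun x : E => (2 : ℝ)⁻¹ • x) (cobounded E) (cobounded E) := by
    rw [← tendsto_norm_atTop_iff_cobounded]
    simpa [norm_smul, div_eq_inv_mul] using half_norm
  have near : Tendsto (fun x => ENNReal.ofReal (K ((2 : ℝ)⁻¹ • x)) *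
      ∫⁻ y, ENNReal.ofReal (f y) ∂μ) (cobounded E) (𝓝 0) := by
    simpa using ENNReal.Tendsto.mul_const (ENNReal.tendsto_ofReal (hKlim.comp half))
      (Or.inr hfi.lintegral_lt_top.ne)
  have far : Tendsto (fun x => ENNReal.ofReal (K 0) *
      ∫⁻ y in (closedBall 0 (‖x‖ / 2))ᶜ, ENNReal.ofReal (f y) ∂μ) (cobounded E) (𝓝 0) := by
    simpa using ENNReal.Tendsto.const_mul ((tendsto_setLIntegral_compl_closedBall
      hfi.aemeasurable.ennreal_ofReal hfi.lintegral_lt_top.ne 0).comp half_norm)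
      (Or.inr ofReal_ne_top)
  exact tendsto_of_tendsto_of_tendsto_of_le_of_le tendsto_const_nhds
    (by simpa using near.add far) (fun _ => zero_le) (hK.lintegral_mul_le hf μ)

end RadiallyAntitone

theorem convolution_tendsto_zero_at_infinity_general
    (d : ℕ) (K f : EuclideanSpace ℝ (Fin d) → ℝ)
    (hK_rad : ∃ Kb : ℝ → ℝ, AntitoneOn Kb (Set.Ici 0) ∧ ∀ x, K x = Kb ‖x‖)
    (hKlim : Tendsto K (cocompact (EuclideanSpace ℝ (Fin d))) (nhds 0))
    (hf0 : ∀ x, 0 ≤ f x) (hfi : Integrable f) :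
    Tendsto (fun x : EuclideanSpace ℝ (Fin d) => ∫⁻ y, ENNReal.ofReal (K (x - y) * f y))
      (cocompact (EuclideanSpace ℝ (Fin d))) (nhds 0) := by
  obtain ⟨Kb, hKb, hK⟩ := hK_rad
  obtain rfl : K = fun x => Kb ‖x‖ := funext hK
  rw [← cobounded_eq_cocompact] at hKlim ⊢
  exact hKb.radiallyAntitone_comp_norm.tendsto_lintegral_mul_cobounded hKlim hf0 hfi

/-- If `K ≥ 0` is radially non-increasing, locally integrable near the origin and
vanishing at infinity, and `f ≥ 0` is radially non-increasing and integrable, then the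
convolution `K ∗ f` vanishes at infinity. -/
theorem convolution_tendsto_zero_at_infinity
    (d : ℕ) (K f : EuclideanSpace ℝ (Fin d) → ℝ)
    (hK0 : ∀ x, 0 ≤ K x)
    (hK_rad : ∃ Kb : ℝ → ℝ, AntitoneOn Kb (Set.Ici 0) ∧ ∀ x, K x = Kb ‖x‖)
    (hKint : IntegrableOn K (Metric.ball (0 : EuclideanSpace ℝ (Fin d)) 1))
    (hKlim : Tendsto K (cocompact (EuclideanSpace ℝ (Fin d))) (nhds 0))
    (hf0 : ∀ x, 0 ≤ f x) (hfi : Integrable f)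
    (hf_rad : ∃ F : ℝ → ℝ, AntitoneOn F (Set.Ici 0) ∧ ∀ x, f x = F ‖x‖) :
    Tendsto (fun x : EuclideanSpace ℝ (Fin d) => ∫⁻ y, ENNReal.ofReal (K (x - y) * f y))
      (cocompact (EuclideanSpace ℝ (Fin d))) (nhds 0) :=
  convolution_tendsto_zero_at_infinity_general d K f hK_rad hKlim hf0 hfi
end
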